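/- arXiv:1701.03852 — 4 statements merged into one kernel-verified Lean document; each statement's English description precedes it below -/
import Mathlib

section
/- Fix n ≥ 1, let R be a commutative ring, and let α₁,…,αₙ, β₁,…,βₙ ∈ R. Work in the polynomial ring R[z₁,…,zₙ]. For each index i set c(i,0) = αᵢ zᵢ⁵, c(i,1) = (αᵢ+βᵢ) zᵢ⁴, c(i,2) = (αᵢ+βᵢ) zᵢ³. Then the sum, over all weakly increasing functions v : {0,…,n} → ℤ with v(0)=0, v(n)=3 and v(i)−v(i−1) ≤ 2 for all i, of the products ∏_{i=1}^{n} c(i, v(i)−v(i−1)), equals ∑_{(j,k), j≠k} (α_j+β_j)(α_k+β_k) z_j³ z_k⁴ ∏_{l∉{j,k}} α_l z_l⁵ + ∑_{{i,j,k} a 3-element subset of {1,…,n}} (α_i+β_i)(α_j+β_j)(α_k+β_k) z_i⁴ z_j⁴ z_k⁴ ∏_{l∉{i,j,k}} α_l z_l⁵. (This is the multidegree of (C₁×⋯×Cₙ)∩V_n in (P⁵)ⁿ for congruences Cᵢ of bidegree (αᵢ,βᵢ).) -/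
open MvPolynomial

namespace MultidegAux

variable {n : ℕ}

/-- extend a step function `Fin n → Fin 3` to `ℕ → ℤ` by zero -/
def dnat (d : Fin n → Fin 3) (j : ℕ) : ℤ :=
  if h : j < n then ((d ⟨j, h⟩ : ℕ) : ℤ) else 0

/-- partial sums of the step function -/
def Vmap (d : Fin n → Fin 3) : Fin (n + 1) → ℤ :=
  fun i => ∑ j ∈ Finset.range (i : ℕ), dnat d j

lemma dnat_nonneg (d : Fin n → Fin 3) (j : ℕ) : 0 ≤ dnat d j := by
  unfold dnat; split <;> positivity

lemma Vmap_step (d : Fin n → Fin 3) (i : Fin n) :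
    Vmap d i.succ - Vmap d i.castSucc = ((d i : ℕ) : ℤ) := by
  unfold Vmap
  rw [Fin.val_succ, Fin.coe_castSucc, Finset.sum_range_succ]
  simp [dnat, i.isLt]

lemma Vmap_zero (d : Fin n → Fin 3) : Vmap d 0 = 0 := by
  simp [Vmap]

lemma Vmap_last (d : Fin n → Fin 3) : Vmap d (Fin.last n) = ∑ i : Fin n, ((d i : ℕ) : ℤ) := by
  rw [Vmap, Fin.val_last,
    show (∑ i : Fin n, ((d i : ℕ) : ℤ)) = ∑ i : Fin n, dnat d (i : ℕ) from
      Finset.sum_congr rfl fun i _ => by simp [dnat, i.isLt]]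
  exact (Fin.sum_univ_eq_sum_range (fun i => dnat d i) n).symm

lemma Vmap_mono (d : Fin n → Fin 3) : Monotone (Vmap d) := by
  intro a b hab
  exact Finset.sum_le_sum_of_subset_of_nonneg
    (Finset.range_subset_range.2 hab) (fun j _ _ => dnat_nonneg d j)

lemma Vmap_inj : Function.Injective (Vmap (n := n)) := by
  intro d d' h
  funext i
  have := (Vmap_step d i).symm.trans (by rw [h, Vmap_step d' i])
  exact Fin.ext (Nat.cast_injective this)


/-- step functions with total sum 3 -/
def D (n : ℕ) : Finset (Fin n → Fin 3) :=
  Finset.univ.filter (fun d => ∑ i, ((d i : ℕ) : ℤ) = 3)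

/-- extension of `v` to `ℕ` -/
def ext (v : Fin (n + 1) → ℤ) (j : ℕ) : ℤ := v ⟨min j n, by omega⟩

lemma ext_eq (v : Fin (n + 1) → ℤ) (i : Fin (n + 1)) : ext v (i : ℕ) = v i := by
  have : min (i : ℕ) n = (i : ℕ) := by omega
  simp only [ext, this]

lemma ext_step (v : Fin (n + 1) → ℤ) {j : ℕ} (hj : j < n) :
    ext v (j + 1) - ext v j = v (Fin.succ ⟨j, hj⟩) - v (Fin.castSucc ⟨j, hj⟩) := by
  have h1 : min (j + 1) n = j + 1 := by omega
  have h2 : min j n = j := by omega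
  simp only [ext, h1, h2]
  rfl

lemma S_eq_image :
    {v : Fin (n + 1) → ℤ | Monotone v ∧ v 0 = 0 ∧ v (Fin.last n) = 3 ∧
        ∀ i : Fin n, v i.succ - v i.castSucc ≤ 2}
      = ↑((D n).image Vmap) := by
  ext v
  simp only [Set.mem_setOf_eq, Finset.coe_image, Set.mem_image, Finset.mem_coe,
    D, Finset.mem_filter, Finset.mem_univ, true_and]
  constructor
  · rintro ⟨hmono, h0, hlast, hle⟩
    have hstep0 : ∀ i : Fin n, 0 ≤ v i.succ - v i.castSucc := fun i =>
      sub_nonneg.2 (hmono (Fin.castSucc_le_succ i))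
    refine ⟨fun i => ⟨(v i.succ - v i.castSucc).toNat, by
      have := hle i; have := hstep0 i; omega⟩, ?_, ?_⟩
    · -- sum = 3
      show ∑ i : Fin n, (((v i.succ - v i.castSucc).toNat : ℕ) : ℤ) = 3
      have h1 : ∀ i : Fin n, v i.succ - v i.castSucc = ext v ((i : ℕ) + 1) - ext v (i : ℕ) := by
        intro i
        rw [ext_step v i.isLt]
      have hlast' : ext v n = 3 := by
        have := ext_eq v (Fin.last n)
        rw [Fin.val_last] at this
        rw [this, hlast]
      have h00 : ext v 0 = 0 := by
        have := ext_eq v 0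
        simpa [h0] using this
      calc ∑ i : Fin n, (((v i.succ - v i.castSucc).toNat : ℕ) : ℤ)
          = ∑ i : Fin n, (ext v ((i : ℕ) + 1) - ext v (i : ℕ)) :=
            Finset.sum_congr rfl fun i _ => by
              rw [Int.toNat_of_nonneg (hstep0 i), h1 i]
        _ = ∑ j ∈ Finset.range n, (ext v (j + 1) - ext v j) :=
            Fin.sum_univ_eq_sum_range (fun j => ext v (j + 1) - ext v j) n
        _ = 3 := by rw [Finset.sum_range_sub, hlast', h00, sub_zero]
    · -- v = Vmap d
      funext i
      rw [← ext_eq v i]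
      have : ext v (i : ℕ) - ext v 0 = ∑ j ∈ Finset.range (i : ℕ), (ext v (j + 1) - ext v j) :=
        (Finset.sum_range_sub (ext v) _).symm
      have h00 : ext v 0 = 0 := by
        have := ext_eq v 0; simpa [h0] using this
      rw [Vmap]
      rw [h00, sub_zero] at this
      rw [this]
      refine Finset.sum_congr rfl fun j hj => ?_
      have hj' : j < n := lt_of_lt_of_le (Finset.mem_range.1 hj) (by omega)
      rw [ext_step v hj']
      simp only [dnat, hj', dif_pos]
      rw [Int.toNat_of_nonneg (hstep0 ⟨j, hj'⟩)]
  · rintro ⟨d, hd, rfl⟩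
    refine ⟨Vmap_mono d, Vmap_zero d, by rw [Vmap_last, hd], fun i => ?_⟩
    rw [Vmap_step]
    have : (d i : ℕ) < 3 := (d i).isLt
    omega


def pairFun (j k : Fin n) : Fin n → Fin 3 := fun i => if i = j then 2 else if i = k then 1 else 0

def setFun (s : Finset (Fin n)) : Fin n → Fin 3 := fun i => if i ∈ s then 1 else 0

lemma pairFun_cast (j k i : Fin n) (hjk : j ≠ k) :
    ((pairFun j k i : ℕ) : ℤ) = (if i = j then 2 else 0) + (if i = k then 1 else 0) := by
  unfold pairFun
  split_ifs with h1 h2 <;> simp_all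

lemma pairFun_sum (j k : Fin n) (hjk : j ≠ k) :
    ∑ i : Fin n, ((pairFun j k i : ℕ) : ℤ) = 3 := by
  simp only [pairFun_cast j k _ hjk]
  rw [Finset.sum_add_distrib, Finset.sum_ite_eq' Finset.univ j, Finset.sum_ite_eq' Finset.univ k]
  simp

lemma setFun_cast (s : Finset (Fin n)) (i : Fin n) :
    ((setFun s i : ℕ) : ℤ) = if i ∈ s then 1 else 0 := by
  unfold setFun; split_ifs <;> simp

lemma setFun_sum (s : Finset (Fin n)) :
    ∑ i : Fin n, ((setFun s i : ℕ) : ℤ) = s.card := by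
  simp only [setFun_cast]
  simp [Finset.sum_ite_mem]

lemma classA (d : Fin n → Fin 3) (hd : ∑ i, ((d i : ℕ) : ℤ) = 3) (j : Fin n) (hj : d j = 2) :
    ∃ k, k ≠ j ∧ d = pairFun j k := by
  have hd' : ∑ i : Fin n, (d i : ℕ) = 3 := by exact_mod_cast hd
  have hj' : (d j : ℕ) = 2 := by rw [hj]; rfl
  have herase : ∑ i ∈ Finset.univ.erase j, (d i : ℕ) = 1 := by
    rw [← Finset.sum_erase_add Finset.univ _ (Finset.mem_univ j), hj'] at hd'
    omega
  have hne : ∃ k ∈ Finset.univ.erase j, (d k : ℕ) ≠ 0 := by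
    by_contra h
    push_neg at h
    rw [Finset.sum_eq_zero h] at herase
    omega
  obtain ⟨k, hk, hk0⟩ := hne
  have hkle : (d k : ℕ) ≤ 1 := by
    have := Finset.single_le_sum (f := fun i => (d i : ℕ)) (fun i _ => Nat.zero_le _) hk
    beta_reduce at this
    omega
  have hk1 : (d k : ℕ) = 1 := by omega
  have hrest : ∀ i ∈ (Finset.univ.erase j).erase k, (d i : ℕ) = 0 := by
    have h2 : ∑ i ∈ (Finset.univ.erase j).erase k, (d i : ℕ) = 0 := by
      rw [← Finset.sum_erase_add _ _ hk, hk1] at herase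
      omega
    exact fun i hi => Finset.sum_eq_zero_iff.1 h2 i hi
  refine ⟨k, (Finset.mem_erase.1 hk).1, funext fun i => ?_⟩
  unfold pairFun
  split_ifs with h1 h2
  · subst h1; exact hj
  · subst h2; exact Fin.ext hk1
  · have : i ∈ (Finset.univ.erase j).erase k := by
      simp [Finset.mem_erase, h1, h2]
    exact Fin.ext (hrest i this)

lemma classB (d : Fin n → Fin 3) (hd : ∑ i, ((d i : ℕ) : ℤ) = 3) (hno : ∀ j, d j ≠ 2) :
    ∃ s : Finset (Fin n), s.card = 3 ∧ d = setFun s := by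
  have hle : ∀ i, (d i : ℕ) ≤ 1 := by
    intro i
    have h3 := (d i).isLt
    have : (d i : ℕ) ≠ 2 := fun h => hno i (Fin.ext h)
    omega
  refine ⟨Finset.univ.filter (fun i => d i = 1), ?_, funext fun i => ?_⟩
  · have : ∀ i : Fin n, ((d i : ℕ) : ℤ) = if d i = 1 then 1 else 0 := by
      intro i
      have := hle i
      rcases Nat.lt_or_ge (d i : ℕ) 1 with h | h
      · have h0 : (d i : ℕ) = 0 := by omega
        have : d i ≠ 1 := fun he => by rw [he] at h0; simp at h0
        simp [h0, this]
      · have h1 : (d i : ℕ) = 1 := by omega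
        have : d i = 1 := Fin.ext h1
        simp [h1, this]
    rw [Finset.sum_congr rfl (fun i _ => this i)] at hd
    rw [Finset.sum_boole] at hd
    exact_mod_cast hd
  · unfold setFun
    simp only [Finset.mem_filter, Finset.mem_univ, true_and]
    split_ifs with h
    · exact h
    · have := hle i
      have h0 : (d i : ℕ) = 0 := by
        rcases Nat.lt_or_ge (d i : ℕ) 1 with h' | h'
        · omega
        · exact absurd (Fin.ext (by omega : (d i : ℕ) = 1)) h
      exact Fin.ext h0


lemma pairFun_inj {j k j' k' : Fin n} (hjk : j ≠ k) (hjk' : j' ≠ k')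
    (h : pairFun j k = pairFun j' k') : j = j' ∧ k = k' := by
  have hj := congrFun h j
  have hk := congrFun h k
  unfold pairFun at hj hk
  rw [if_pos rfl] at hj
  rw [if_neg (Ne.symm hjk), if_pos rfl] at hk
  have hjj : j = j' := by
    by_contra hne
    rw [if_neg hne] at hj
    split_ifs at hj <;> exact absurd hj (by decide)
  subst hjj
  refine ⟨rfl, ?_⟩
  rw [if_neg (Ne.symm hjk)] at hk
  by_contra hne
  rw [if_neg hne] at hk
  exact absurd hk (by decide)

lemma setFun_inj {s t : Finset (Fin n)} (h : setFun s = setFun t) : s = t := by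
  ext i
  have hi := congrFun h i
  unfold setFun at hi
  by_cases h1 : i ∈ s <;> by_cases h2 : i ∈ t
  · simp [h1, h2]
  · rw [if_pos h1, if_neg h2] at hi; exact absurd hi (by decide)
  · rw [if_neg h1, if_pos h2] at hi; exact absurd hi (by decide)
  · simp [h1, h2]

variable {R : Type*} [CommRing R]

lemma pairFun_prod (c : Fin n → ℤ → MvPolynomial (Fin n) R) (j k : Fin n) (hjk : j ≠ k) :
    ∏ i : Fin n, c i ((pairFun j k i : ℕ) : ℤ)
      = c j 2 * c k 1 * ∏ l ∈ ({j, k} : Finset (Fin n))ᶜ, c l 0 := by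
  rw [← Finset.prod_mul_prod_compl ({j, k} : Finset (Fin n))
    (fun i => c i ((pairFun j k i : ℕ) : ℤ)), Finset.prod_pair hjk]
  have hj : ((pairFun j k j : ℕ) : ℤ) = 2 := by simp [pairFun]
  have hk : ((pairFun j k k : ℕ) : ℤ) = 1 := by simp [pairFun, Ne.symm hjk]
  rw [hj, hk]
  congr 1
  refine Finset.prod_congr rfl fun l hl => ?_
  simp only [Finset.mem_compl, Finset.mem_insert, Finset.mem_singleton, not_or] at hl
  have : ((pairFun j k l : ℕ) : ℤ) = 0 := by simp [pairFun, hl.1, hl.2]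
  rw [this]

lemma setFun_prod (c : Fin n → ℤ → MvPolynomial (Fin n) R) (s : Finset (Fin n)) :
    ∏ i : Fin n, c i ((setFun s i : ℕ) : ℤ)
      = (∏ i ∈ s, c i 1) * ∏ l ∈ sᶜ, c l 0 := by
  rw [← Finset.prod_mul_prod_compl s (fun i => c i ((setFun s i : ℕ) : ℤ))]
  congr 1
  · exact Finset.prod_congr rfl fun i hi => by simp [setFun, hi]
  · exact Finset.prod_congr rfl fun l hl => by
      simp only [Finset.mem_compl] at hl
      simp [setFun, hl]

end MultidegAux

open MultidegAux in
/-- The multidegree of `(C₁×⋯×Cₙ) ∩ V_n` in `(ℙ⁵)ⁿ`, for congruences `Cᵢ` of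
bidegree `(αᵢ, βᵢ)`: summing, over all gap sequences `v`, the products
`∏ᵢ c(i, v i − v (i-1))` where `c(i,0) = αᵢ zᵢ⁵`, `c(i,1) = (αᵢ+βᵢ) zᵢ⁴`,
`c(i,2) = (αᵢ+βᵢ) zᵢ³`, yields
`∑_{(j,k), j≠k} (α_j+β_j)(α_k+β_k) z_j³ z_k⁴ ∏_{l∉{j,k}} α_l z_l⁵
 + ∑_{{i,j,k}} (α_i+β_i)(α_j+β_j)(α_k+β_k) z_i⁴ z_j⁴ z_k⁴ ∏_{l∉{i,j,k}} α_l z_l⁵`. -/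
theorem multidegree_multi_image_general (n : ℕ) (hn : 1 ≤ n)
    {R : Type*} [CommRing R] (α β : Fin n → R)
    (c : Fin n → ℤ → MvPolynomial (Fin n) R)
    (hc0 : ∀ i, c i 0 = C (α i) * X i ^ 5)
    (hc1 : ∀ i, c i 1 = C (α i + β i) * X i ^ 4)
    (hc2 : ∀ i, c i 2 = C (α i + β i) * X i ^ 3) :
    (∑ᶠ v ∈ {v : Fin (n + 1) → ℤ | Monotone v ∧ v 0 = 0 ∧ v (Fin.last n) = 3 ∧
        ∀ i : Fin n, v i.succ - v i.castSucc ≤ 2},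
      ∏ i : Fin n, c i (v i.succ - v i.castSucc))
    = (∑ p ∈ Finset.univ.filter (fun p : Fin n × Fin n => p.1 ≠ p.2),
        C ((α p.1 + β p.1) * (α p.2 + β p.2)) * X p.1 ^ 3 * X p.2 ^ 4 *
          ∏ l ∈ ({p.1, p.2} : Finset (Fin n))ᶜ, C (α l) * X l ^ 5)
      + (∑ s ∈ Finset.univ.powersetCard 3,
        (∏ i ∈ s, C (α i + β i) * X i ^ 4) * ∏ l ∈ sᶜ, C (α l) * X l ^ 5) := by
  classical
  rw [S_eq_image, finsum_mem_coe_finset,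
    Finset.sum_image (fun d _ d' _ h => Vmap_inj h)]
  simp_rw [Vmap_step]
  rw [← Finset.sum_filter_add_sum_filter_not (D n) (fun d => ∃ j, d j = 2)]
  congr 1
  · refine (Finset.sum_bij (fun (p : Fin n × Fin n) _ => pairFun p.1 p.2) ?_ ?_ ?_ ?_).symm
    · rintro ⟨j, k⟩ hp
      simp only [Finset.mem_filter, Finset.mem_univ, true_and] at hp ⊢
      refine ⟨Finset.mem_filter.2 ⟨Finset.mem_univ _, pairFun_sum j k hp⟩, j, ?_⟩
      simp [pairFun]
    · rintro ⟨j, k⟩ hp ⟨j', k'⟩ hp' h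
      simp only [Finset.mem_filter, Finset.mem_univ, true_and] at hp hp'
      obtain ⟨h1, h2⟩ := pairFun_inj hp hp' h
      simp [h1, h2]
    · intro d hd
      simp only [Finset.mem_filter] at hd
      obtain ⟨hdD, j, hj⟩ := hd
      have hsum := (Finset.mem_filter.1 hdD).2
      obtain ⟨k, hkj, hdk⟩ := classA d hsum j hj
      exact ⟨(j, k), Finset.mem_filter.2 ⟨Finset.mem_univ _, Ne.symm hkj⟩, hdk.symm⟩
    · rintro ⟨j, k⟩ hp
      simp only [Finset.mem_filter, Finset.mem_univ, true_and] at hp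
      rw [pairFun_prod c j k hp, hc2, hc1,
        Finset.prod_congr rfl (fun l _ => hc0 l), map_mul]
      ring
  · refine (Finset.sum_bij (fun (s : Finset (Fin n)) _ => setFun s) ?_ ?_ ?_ ?_).symm
    · intro s hs
      rw [Finset.mem_powersetCard_univ] at hs
      simp only [Finset.mem_filter, not_exists]
      refine ⟨Finset.mem_filter.2 ⟨Finset.mem_univ _, by rw [setFun_sum, hs]; rfl⟩, fun j h => ?_⟩
      unfold setFun at h
      split_ifs at h <;> exact absurd h (by decide)
    · intro s _ t _ h
      exact setFun_inj h
    · intro d hd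
      simp only [Finset.mem_filter, not_exists] at hd
      obtain ⟨hdD, hno⟩ := hd
      have hsum := (Finset.mem_filter.1 hdD).2
      obtain ⟨s, hcard, hds⟩ := classB d hsum hno
      exact ⟨s, Finset.mem_powersetCard_univ.2 hcard, hds.symm⟩
    · intro s _
      rw [setFun_prod c s, Finset.prod_congr rfl (fun i _ => hc1 i),
        Finset.prod_congr rfl (fun l _ => hc0 l)]
end

section
/- Let k be a field, let x, y ∈ k⁴ be linearly independent, let L = span{x, y}, and let e₀, e₁ be the first two standard basis vectors of k⁴. Then L ∩ span{e₀, e₁} ≠ {0} if and only if x(2)·y(3) − x(3)·y(2) = 0, i.e. the Plücker coordinate p(2,3) of L vanishes. -/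
/-- The Schubert variety `X₁` as a hyperplane section: for a line
`L = span{x,y}` in `ℙ³`, `L` meets the line `span{e₀,e₁}` if and only if its
Plücker coordinate `p 2 3 = x 2 * y 3 - x 3 * y 2` vanishes. -/
theorem schubert_X1_plucker {k : Type*} [Field k] (x y : Fin 4 → k)
    (hxy : LinearIndependent k ![x, y]) :
    Submodule.span k {x, y} ⊓
        Submodule.span k {(Pi.single 0 1 : Fin 4 → k), (Pi.single 1 1 : Fin 4 → k)} ≠ ⊥
      ↔ x 2 * y 3 - x 3 * y 2 = 0 := by
  rw [LinearIndependent.pair_iff] at hxy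
  constructor
  · intro h
    obtain ⟨v, hv, hv0⟩ := Submodule.exists_mem_ne_zero_of_ne_bot h
    rw [Submodule.mem_inf] at hv
    obtain ⟨a, b, hab⟩ := Submodule.mem_span_pair.mp hv.1
    obtain ⟨c, d, hcd⟩ := Submodule.mem_span_pair.mp hv.2
    have h2 : a * x 2 + b * y 2 = 0 := by
      have h1 := congrFun hab 2
      have h2 := congrFun hcd 2
      simp [Pi.single_apply] at h1 h2
      rw [h1, ← h2]
    have h3 : a * x 3 + b * y 3 = 0 := by
      have h1 := congrFun hab 3
      have h2 := congrFun hcd 3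
      simp [Pi.single_apply] at h1 h2
      rw [h1, ← h2]
    have habne : ¬(a = 0 ∧ b = 0) := by
      rintro ⟨rfl, rfl⟩
      simp at hab
      exact hv0 hab.symm
    have key : a * (x 2 * y 3 - x 3 * y 2) = 0 ∧ b * (x 2 * y 3 - x 3 * y 2) = 0 := by
      exact ⟨by linear_combination y 3 * h2 - y 2 * h3, by linear_combination x 2 * h3 - x 3 * h2⟩
    rcases mul_eq_zero.mp key.1 with ha | hd
    · rcases mul_eq_zero.mp key.2 with hb | hd
      · exact absurd ⟨ha, hb⟩ habne
      · exact hd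
    · exact hd
  · intro hdet
    -- construct a nonzero vector in the intersection
    obtain ⟨a, b, hab0, h2, h3⟩ :
        ∃ a b : k, ¬(a = 0 ∧ b = 0) ∧ a * x 2 + b * y 2 = 0 ∧ a * x 3 + b * y 3 = 0 := by
      by_cases hx2 : x 2 = 0
      · by_cases hx3 : x 3 = 0
        · exact ⟨1, 0, by simp, by simp [hx2], by simp [hx3]⟩
        · exact ⟨y 3, -x 3, fun h => hx3 (neg_eq_zero.mp h.2),
            by linear_combination hdet, by ring⟩
      · exact ⟨y 2, -x 2, fun h => hx2 (neg_eq_zero.mp h.2),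
          by ring, by linear_combination -hdet⟩
    set v : Fin 4 → k := a • x + b • y with hv
    have hvne : v ≠ 0 := by
      intro h
      exact hab0 (hxy a b h)
    apply Submodule.ne_bot_iff _ |>.mpr
    refine ⟨v, Submodule.mem_inf.mpr ⟨?_, ?_⟩, hvne⟩
    · exact Submodule.mem_span_pair.mpr ⟨a, b, rfl⟩
    · refine Submodule.mem_span_pair.mpr ⟨v 0, v 1, ?_⟩
      funext i
      fin_cases i <;> simp [hv, Pi.single_apply, h2, h3]
end

section
/- Let k be a field, let x, y ∈ k⁴ be linearly independent, let L = span{x, y}, and let e₀ be the first standard basis vector of k⁴. Then e₀ ∈ L if and only if the three Plücker coordinates p(1,2), p(1,3), p(2,3) of L all vanish, where p(i,j) = x(i)·y(j) − x(j)·y(i). -/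
/-- The Schubert variety `X₂` as a linear section: for a line `L = span{x,y}`
in `ℙ³`, the point `e₀` lies on `L` if and only if the Plücker coordinates
`p 1 2`, `p 1 3`, `p 2 3` of `L` all vanish. -/
theorem schubert_X2_plucker {k : Type*} [Field k] (x y : Fin 4 → k)
    (hxy : LinearIndependent k ![x, y]) :
    (Pi.single 0 1 : Fin 4 → k) ∈ Submodule.span k {x, y}
      ↔ (x 1 * y 2 - x 2 * y 1 = 0 ∧ x 1 * y 3 - x 3 * y 1 = 0 ∧
          x 2 * y 3 - x 3 * y 2 = 0) := by
  rw [Submodule.mem_span_pair, LinearIndependent.pair_iff] at *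
  have m0 : ∀ h, (⟨0, h⟩ : Fin 4) = 0 := fun _ => rfl
  have m1 : ∀ h, (⟨1, h⟩ : Fin 4) = 1 := fun _ => rfl
  have m2 : ∀ h, (⟨2, h⟩ : Fin 4) = 2 := fun _ => rfl
  have m3 : ∀ h, (⟨3, h⟩ : Fin 4) = 3 := fun _ => rfl
  have s0 : (Pi.single 0 1 : Fin 4 → k) 0 = 1 := Pi.single_eq_same 0 1
  have s1 : (Pi.single 0 1 : Fin 4 → k) 1 = 0 :=
    Pi.single_eq_of_ne (by decide : (1 : Fin 4) ≠ 0) 1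
  have s2 : (Pi.single 0 1 : Fin 4 → k) 2 = 0 :=
    Pi.single_eq_of_ne (by decide : (2 : Fin 4) ≠ 0) 1
  have s3 : (Pi.single 0 1 : Fin 4 → k) 3 = 0 :=
    Pi.single_eq_of_ne (by decide : (3 : Fin 4) ≠ 0) 1
  constructor
  · rintro ⟨a, b, hab⟩
    have h0 := congrFun hab 0
    have h1 := congrFun hab 1
    have h2 := congrFun hab 2
    have h3 := congrFun hab 3
    simp only [Pi.add_apply, Pi.smul_apply, smul_eq_mul, s0, s1, s2, s3] at h0 h1 h2 h3
    have hab0 : a ≠ 0 ∨ b ≠ 0 := by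
      by_contra h
      push_neg at h
      rw [h.1, h.2] at h0
      simp at h0
    have key : ∀ i j : Fin 4, a * x i + b * y i = 0 → a * x j + b * y j = 0 →
        x i * y j - x j * y i = 0 := by
      intro i j hi hj
      rcases hab0 with ha | hb
      · have : a * (x i * y j - x j * y i) = 0 := by linear_combination y j * hi - y i * hj
        rcases mul_eq_zero.mp this with h | h
        · exact absurd h ha
        · exact h
      · have : b * (x i * y j - x j * y i) = 0 := by linear_combination x i * hj - x j * hi
        rcases mul_eq_zero.mp this with h | h
        · exact absurd h hb
        · exact h
    exact ⟨key 1 2 h1 h2, key 1 3 h1 h3, key 2 3 h2 h3⟩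
  · rintro ⟨h12, h13, h23⟩
    have main : ∀ c : k, x 1 = c * y 1 → x 2 = c * y 2 → x 3 = c * y 3 →
        ∃ a b : k, a • x + b • y = (Pi.single 0 1 : Fin 4 → k) := by
      intro c e1 e2 e3
      have hd : x 0 - c * y 0 ≠ 0 := by
        intro hd0
        have hx : (1 : k) • x + (-c) • y = 0 := by
          funext i
          fin_cases i <;>
            simp only [m0, m1, m2, m3, Pi.add_apply, Pi.smul_apply, smul_eq_mul,
              Pi.zero_apply, one_mul, neg_mul]
          · linear_combination hd0
          · linear_combination e1
          · linear_combination e2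
          · linear_combination e3
        exact one_ne_zero (hxy 1 (-c) hx).1
      refine ⟨(x 0 - c * y 0)⁻¹, -(c * (x 0 - c * y 0)⁻¹), ?_⟩
      funext i
      fin_cases i <;>
        simp only [m0, m1, m2, m3, Pi.add_apply, Pi.smul_apply, smul_eq_mul, s0, s1, s2, s3]
      · field_simp
        ring
      · rw [e1]; ring_nf
      · rw [e2]; ring_nf
      · rw [e3]; ring_nf
    by_cases hy1 : y 1 = 0
    · by_cases hy2 : y 2 = 0
      · by_cases hy3 : y 3 = 0
        · -- y 1 = y 2 = y 3 = 0, so y = y 0 • e₀ with y 0 ≠ 0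
          have hy0 : y 0 ≠ 0 := by
            intro hy0
            have hy : (0 : k) • x + (1 : k) • y = 0 := by
              funext i
              fin_cases i <;>
                simp only [m0, m1, m2, m3, Pi.add_apply, Pi.smul_apply, smul_eq_mul,
                  Pi.zero_apply, one_mul, zero_mul, zero_add]
              · exact hy0
              · exact hy1
              · exact hy2
              · exact hy3
            exact one_ne_zero (hxy 0 1 hy).2
          refine ⟨0, (y 0)⁻¹, ?_⟩
          funext i
          fin_cases i <;>
            simp only [m0, m1, m2, m3, Pi.add_apply, Pi.smul_apply, smul_eq_mul,
              s0, s1, s2, s3, zero_mul, zero_add]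
          · field_simp
          · rw [hy1]; ring_nf
          · rw [hy2]; ring_nf
          · rw [hy3]; ring_nf
        · refine main (x 3 * (y 3)⁻¹) ?_ ?_ ?_
          · field_simp
            linear_combination h13
          · field_simp
            linear_combination h23
          · field_simp
      · refine main (x 2 * (y 2)⁻¹) ?_ ?_ ?_
        · field_simp
          linear_combination h12
        · field_simp
        · field_simp
          linear_combination -h23
    · refine main (x 1 * (y 1)⁻¹) ?_ ?_ ?_
      · field_simp
      · field_simp
        linear_combination -h12
      · field_simp
        linear_combination -h13
end

section
/- Let k be a field, let x, y ∈ k⁴ be linearly independent, let L = span{x, y}, and let e₀, e₁, e₂ be the first three standard basis vectors of k⁴. Then L ⊆ span{e₀, e₁, e₂} if and only if the three Plücker coordinates p(0,3), p(1,3), p(2,3) of L all vanish, where p(i,j) = x(i)·y(j) − x(j)·y(i). -/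
/-- The Schubert variety `X_{1,1}` as a linear section: for a line
`L = span{x,y}` in `ℙ³`, `L` is contained in the plane `span{e₀,e₁,e₂}` if and
only if the Plücker coordinates `p 0 3`, `p 1 3`, `p 2 3` of `L` all vanish. -/
theorem schubert_X11_plucker {k : Type*} [Field k] (x y : Fin 4 → k)
    (hxy : LinearIndependent k ![x, y]) :
    Submodule.span k {x, y} ≤
        Submodule.span k {(Pi.single 0 1 : Fin 4 → k), (Pi.single 1 1 : Fin 4 → k),
          (Pi.single 2 1 : Fin 4 → k)}
      ↔ (x 0 * y 3 - x 3 * y 0 = 0 ∧ x 1 * y 3 - x 3 * y 1 = 0 ∧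
          x 2 * y 3 - x 3 * y 2 = 0) := by
  have hplane : ∀ v : Fin 4 → k,
      v ∈ Submodule.span k {(Pi.single 0 1 : Fin 4 → k), (Pi.single 1 1 : Fin 4 → k),
        (Pi.single 2 1 : Fin 4 → k)} ↔ v 3 = 0 := by
    intro v
    constructor
    · intro hv
      have hle : Submodule.span k {(Pi.single 0 1 : Fin 4 → k), (Pi.single 1 1 : Fin 4 → k),
          (Pi.single 2 1 : Fin 4 → k)} ≤
          LinearMap.ker (LinearMap.proj 3 : (Fin 4 → k) →ₗ[k] k) := by
        rw [Submodule.span_le]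
        rintro w (rfl | rfl | rfl) <;> simp [Pi.single_apply]
      exact hle hv
    · intro hv
      have hrep : v = v 0 • (Pi.single 0 1 : Fin 4 → k) + v 1 • (Pi.single 1 1 : Fin 4 → k)
          + v 2 • (Pi.single 2 1 : Fin 4 → k) := by
        funext i; fin_cases i <;> simp [Pi.single_apply, hv]
      rw [hrep]
      refine Submodule.add_mem _ (Submodule.add_mem _ ?_ ?_) ?_ <;>
        exact Submodule.smul_mem _ _ (Submodule.subset_span (by simp))
  have hspan : Submodule.span k {x, y} ≤
      Submodule.span k {(Pi.single 0 1 : Fin 4 → k), (Pi.single 1 1 : Fin 4 → k),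
        (Pi.single 2 1 : Fin 4 → k)} ↔ x 3 = 0 ∧ y 3 = 0 := by
    rw [Submodule.span_le, Set.insert_subset_iff, Set.singleton_subset_iff]
    simp only [SetLike.mem_coe, hplane]
  rw [hspan]
  constructor
  · rintro ⟨hx, hy⟩
    refine ⟨?_, ?_, ?_⟩ <;> rw [hx, hy] <;> ring
  · rintro ⟨h0, h1, h2⟩
    have hcomb : y 3 • x - x 3 • y = 0 := by
      funext i
      fin_cases i <;> simp [Pi.smul_apply, smul_eq_mul] <;>
        first
          | linear_combination h0
          | linear_combination h1
          | linear_combination h2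
          | ring
    have key := Fintype.linearIndependent_iff.mp hxy ![y 3, -(x 3)] ?_
    · constructor
      · have := key 1
        simpa using this
      · have := key 0
        simpa using this
    · have : (∑ i : Fin 2, ![y 3, -(x 3)] i • ![x, y] i) = y 3 • x - x 3 • y := by
        simp [Fin.sum_univ_two, sub_eq_add_neg]
      rw [this, hcomb]
end
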